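/- arXiv:2109.09538 — 8 statements merged into one kernel-verified Lean document; each statement's English description precedes it below -/
import Mathlib

section
/- Let (Q, C) be a torsion pair in an abelian category G and let X, X' be two torsionfree, almost torsion objects with respect to (Q, C). If Hom(X, X') ≠ 0, then X ≅ X'. -/
open CategoryTheory Category Limits

universe v u

/-- A torsion pair `(Q, C)` in an abelian category. -/
structure TorsionPair (C : Type u) [Category.{v} C] [Abelian C] where
  torsion : Set C
  torsionFree : Set C
  hom_vanish : ∀ ⦃T F : C⦄, T ∈ torsion → F ∈ torsionFree → ∀ f : T ⟶ F, f = 0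
  exists_ses : ∀ X : C, ∃ (T F : C) (i : T ⟶ X) (p : X ⟶ F) (w : i ≫ p = 0),
    T ∈ torsion ∧ F ∈ torsionFree ∧ (ShortComplex.mk i p w).ShortExact

/-- `Y` is torsionfree, almost torsion with respect to a torsion pair `(Q, C)`:
`Y ∈ C`, every proper quotient of `Y` lies in `Q`, and for every short exact sequence
`0 → Y → B → C' → 0` with `B ∈ C` one has `C' ∈ C`. -/
def IsTorsionFreeAlmostTorsion {C : Type u} [Category.{v} C] [Abelian C]
    (tp : TorsionPair C) (Y : C) : Prop :=
  Y ∈ tp.torsionFree ∧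
  (∀ (Z : C) (p : Y ⟶ Z), Epi p → ¬ IsIso p → Z ∈ tp.torsion) ∧
  (∀ (B Z : C) (i : Y ⟶ B) (p : B ⟶ Z) (w : i ≫ p = 0),
    (ShortComplex.mk i p w).ShortExact → B ∈ tp.torsionFree → Z ∈ tp.torsionFree)

/-- If `X` and `X'` are torsionfree, almost torsion and `Hom(X, X') ≠ 0`, then `X ≅ X'`. -/
theorem torsionFreeAlmostTorsion_hom_nonzero_iso {C : Type u} [Category.{v} C] [Abelian C]
    (tp : TorsionPair C) (X X' : C)
    (hX : IsTorsionFreeAlmostTorsion tp X) (hX' : IsTorsionFreeAlmostTorsion tp X')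
    (f : X ⟶ X') (hf : f ≠ 0) : Nonempty (X ≅ X') := by
  -- Step 1: the image factorization map X ⟶ image f is an iso.
  have hι : image.ι f ≠ 0 := by
    intro h
    apply hf
    rw [← image.fac f, h, comp_zero]
  have he : IsIso (factorThruImage f) := by
    by_contra h
    exact hι (tp.hom_vanish (hX.2.1 (image f) (factorThruImage f) inferInstance h)
      hX'.1 (image.ι f))
  have hmono : Mono f := by
    rw [← image.fac f]
    exact mono_comp _ _
  -- Step 2: 0 → X → X' → cokernel f → 0 is short exact
  have hSE : (ShortComplex.mk f (cokernel.π f) (cokernel.condition f)).ShortExact := by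
    have hex : (ShortComplex.mk f (cokernel.π f) (cokernel.condition f)).Exact :=
      ShortComplex.exact_of_g_is_cokernel _ (cokernelIsCokernel f)
    exact { exact := hex, mono_f := hmono, epi_g := inferInstance }
  have hcof : cokernel f ∈ tp.torsionFree :=
    hX.2.2 X' (cokernel f) f (cokernel.π f) (cokernel.condition f) hSE hX'.1
  have hπ : ¬ IsIso (cokernel.π f) := by
    intro h
    apply hf
    have := cokernel.condition f
    exact (cancel_mono (cokernel.π f)).1 (by simp [this])
  have hcot : cokernel f ∈ tp.torsion :=
    hX'.2.1 (cokernel f) (cokernel.π f) inferInstance hπ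
  have hz : IsZero (cokernel f) := by
    rw [IsZero.iff_id_eq_zero]
    exact tp.hom_vanish hcot hcof _
  have hepi : Epi f := Preadditive.epi_of_isZero_cokernel f hz
  have : IsIso f := isIso_of_mono_of_epi f
  exact ⟨asIso f⟩
end

section
/- Let (Q, C) be a torsion pair in an abelian category G and let X, X' be two torsion, almost torsionfree objects with respect to (Q, C). If Hom(X, X') ≠ 0, then X ≅ X'. -/
open CategoryTheory Category Limits

universe v u

/-- `Y` is torsion, almost torsionfree with respect to a torsion pair `(Q, C)`:
`Y ∈ Q`, every proper subobject of `Y` lies in `C`, and for every short exact sequence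
`0 → A → B → Y → 0` with `B ∈ Q` one has `A ∈ Q`. -/
def IsTorsionAlmostTorsionFree {C : Type u} [Category.{v} C] [Abelian C]
    (tp : TorsionPair C) (Y : C) : Prop :=
  Y ∈ tp.torsion ∧
  (∀ (Z : C) (i : Z ⟶ Y), Mono i → ¬ IsIso i → Z ∈ tp.torsionFree) ∧
  (∀ (A B : C) (i : A ⟶ B) (p : B ⟶ Y) (w : i ≫ p = 0),
    (ShortComplex.mk i p w).ShortExact → B ∈ tp.torsion → A ∈ tp.torsion)

/-- If `X` and `X'` are torsion, almost torsionfree and `Hom(X, X') ≠ 0`, then `X ≅ X'`. -/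
theorem torsionAlmostTorsionFree_hom_nonzero_iso {C : Type u} [Category.{v} C] [Abelian C]
    (tp : TorsionPair C) (X X' : C)
    (hX : IsTorsionAlmostTorsionFree tp X) (hX' : IsTorsionAlmostTorsionFree tp X')
    (f : X ⟶ X') (hf : f ≠ 0) : Nonempty (X ≅ X') := by
  -- Step 1: the image inclusion is an isomorphism, hence `f` is epi.
  have him : IsIso (Abelian.image.ι f) := by
    by_contra h
    have hmem : Abelian.image f ∈ tp.torsionFree :=
      hX'.2.1 _ (Abelian.image.ι f) inferInstance h
    have : Abelian.factorThruImage f = 0 := tp.hom_vanish hX.1 hmem _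
    exact hf (by rw [← Abelian.image.fac f, this, zero_comp])
  have hepi : Epi f := by
    rw [← Abelian.image.fac f]
    exact epi_comp _ _
  -- Step 2: the kernel of `f` is torsion.
  have hses : (ShortComplex.mk (kernel.ι f) f (kernel.condition f)).ShortExact :=
    ⟨ShortComplex.exact_of_f_is_kernel _ (kernelIsKernel f)⟩
  have hK : kernel f ∈ tp.torsion := hX'.2.2 _ _ _ _ _ hses hX.1
  -- Step 3: the kernel inclusion is not an isomorphism (else `f = 0`).
  have hKι : ¬ IsIso (kernel.ι f) := by
    intro h
    exact hf ((cancel_epi (kernel.ι f)).1 (by simp))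
  -- Step 4: the kernel is torsionfree, hence zero, so `f` is mono.
  have hKF : kernel f ∈ tp.torsionFree := hX.2.1 _ (kernel.ι f) inferInstance hKι
  have hz : IsZero (kernel f) := by
    rw [IsZero.iff_id_eq_zero]
    exact tp.hom_vanish hK hKF _
  have hmono : Mono f := by
    have : kernel.ι f = 0 := hz.eq_of_src _ _
    exact Preadditive.mono_of_kernel_zero this
  have : IsIso f := isIso_of_mono_of_epi f
  exact ⟨asIso f⟩
end

section
/- An object X of a Grothendieck category is monoform if and only if X is uniform and for every nonzero subobject H of X, the only object isomorphic to both a subobject of H and a subobject of X/H is the zero object. -/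
open CategoryTheory Category Limits

universe v u

/-- A Grothendieck category: an abelian category with (small) colimits, exact filtered
colimits (AB5) and a separator. -/
class GrothendieckCategory (C : Type u) [Category.{v} C] [Abelian C] : Prop where
  hasColimits : Limits.HasColimits C
  hasFilteredColimits : Limits.HasFilteredColimits C
  ab5 : @AB5 C _ hasFilteredColimits
  hasSeparator : HasSeparator C

/-- An object `X` is monoform if for every subobject `H` of `X`, every nonzero morphism
`H ⟶ X` is a monomorphism. -/
def Monoform {C : Type u} [Category.{v} C] [Abelian C] (X : C) : Prop :=
  ∀ ⦃H : C⦄ (i : H ⟶ X), Mono i → ∀ f : H ⟶ X, f ≠ 0 → Mono f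

/-- An object `X` is uniform if any two nonzero subobjects of `X` have nonzero
intersection. -/
def Uniform {C : Type u} [Category.{v} C] [Abelian C] (X : C) : Prop :=
  ∀ A B : Subobject X, A ≠ ⊥ → B ≠ ⊥ → A ⊓ B ≠ ⊥

/-!
A nonzero morphism `f : H ⟶ X` from a subobject `H ⊆ X` with kernel `K ≠ 0` yields two nonzero
subobjects `K` and `im f ≅ H/K ⊆ X/K` of `X`; if `X` is uniform they meet in a nonzero object
that embeds both in `K` and in `X/K`. Conversely, if `X` is monoform, disjoint nonzero subobjects
`A`, `B` would make the projection `A ⊕ B ↠ A ↪ X` a non-monic map from the subobject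
`A ⊕ B ⊆ X`, and a common subobject `Y` of `H` and `X/H` would make `P ↠ Y ↪ H ↪ X` a non-monic
map from the preimage `P ⊆ X` of `Y`, which vanishes on `H ⊆ P`.
-/

variable {C : Type u} [Category.{v} C]

namespace CategoryTheory.Subobject

variable [HasZeroMorphisms C] [HasZeroObject C] {X : C}

theorem mk_eq_bot_iff_isZero {A : C} (f : A ⟶ X) [Mono f] : mk f = ⊥ ↔ IsZero A :=
  mk_eq_bot_iff_zero.trans ⟨IsZero.of_mono_eq_zero f, fun h => h.eq_of_src _ _⟩

theorem eq_bot_iff_isZero (P : Subobject X) : P = ⊥ ↔ IsZero (P : C) := by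
  simpa using mk_eq_bot_iff_isZero P.arrow

end CategoryTheory.Subobject

theorem mono_biprod_desc_of_isPullback_of_isZero [Preadditive C] [HasBinaryBiproducts C]
    {P A B X : C} {p : P ⟶ A} {q : P ⟶ B} {a : A ⟶ X} {b : B ⟶ X} (sq : IsPullback p q a b)
    (hP : IsZero P) : Mono (biprod.desc a b) := by
  refine Preadditive.mono_of_cancel_zero _ fun g hg => ?_
  have hw : (g ≫ biprod.fst) ≫ a = (-(g ≫ biprod.snd)) ≫ b := by
    rw [Preadditive.neg_comp, eq_neg_iff_add_eq_zero]
    simpa [biprod.desc_eq] using hg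
  have hlift : sq.lift _ _ hw = 0 := hP.eq_of_tgt _ _
  have hfst : g ≫ biprod.fst = 0 := by simpa [hlift] using (sq.lift_fst _ _ hw).symm
  have hsnd : g ≫ biprod.snd = 0 := by simpa [hlift] using (sq.lift_snd _ _ hw).symm
  ext <;> simp [hfst, hsnd]

variable [Abelian C]

instance mono_cokernel_map_comp_of_mono {K H X : C} (k : K ⟶ H) (i : H ⟶ X) [Mono i] :
    Mono (cokernel.map k (k ≫ i) (𝟙 K) i (by simp)) :=
  Abelian.mono_cokernel_map_of_isPullback (IsPullback.of_vert_isIso_mono ⟨by simp⟩)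

theorem Uniform.not_isZero_pullback {X A B : C} (hX : Uniform X) (a : A ⟶ X) (b : B ⟶ X)
    [Mono a] [Mono b] (hA : ¬IsZero A) (hB : ¬IsZero B) : ¬IsZero (pullback a b) := by
  have hAB := hX (Subobject.mk a) (Subobject.mk b) (by rwa [Ne, Subobject.mk_eq_bot_iff_isZero])
    (by rwa [Ne, Subobject.mk_eq_bot_iff_isZero])
  rw [Ne, Subobject.eq_bot_iff_isZero] at hAB
  intro hP
  let l : ((Subobject.mk a ⊓ Subobject.mk b : Subobject X) : C) ⟶ pullback a b :=
    pullback.lift (Subobject.ofLE _ _ inf_le_left ≫ (Subobject.underlyingIso a).hom)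
      (Subobject.ofLE _ _ inf_le_right ≫ (Subobject.underlyingIso b).hom) (by simp)
  have : Mono l :=
    mono_of_mono_fac (f := pullback.fst a b ≫ a) (h := (Subobject.mk a ⊓ Subobject.mk b).arrow)
      (by simp only [l, pullback.lift_fst_assoc, assoc, Subobject.underlyingIso_hom_comp_eq_mk,
        Subobject.ofLE_arrow])
  exact hAB (hP.of_mono l)

namespace Monoform

theorem uniform {X : C} (hX : Monoform X) : Uniform X := by
  intro A B hA hB hAB
  rw [Ne, Subobject.eq_bot_iff_isZero] at hA hB
  rw [Subobject.eq_bot_iff_isZero] at hAB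
  have := mono_biprod_desc_of_isPullback_of_isZero (Subobject.inf_isPullback A B) hAB
  have hf : (biprod.fst ≫ A.arrow : (A : C) ⊞ (B : C) ⟶ X) ≠ 0 := fun h =>
    hA (IsZero.of_mono_eq_zero A.arrow (by simpa using biprod.inl ≫= h))
  have := hX _ this _ hf
  exact hB (IsZero.of_mono_eq_zero biprod.inr (zero_of_comp_mono (biprod.fst ≫ A.arrow) (by simp)))

theorem isZero_of_mono_of_mono_cokernel {X H Y : C} (hX : Monoform X) (i : H ⟶ X) [Mono i]
    (hH : ¬IsZero H) (j : Y ⟶ H) [Mono j] (k : Y ⟶ cokernel i) [Mono k] : IsZero Y := by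
  let l : H ⟶ pullback k (cokernel.π i) := pullback.lift 0 i (by simp)
  have : Mono l := mono_of_mono_fac (pullback.lift_snd _ _ _)
  let f := pullback.fst k (cokernel.π i) ≫ j ≫ i
  have hlf : l ≫ f = 0 := by simp only [l, f, pullback.lift_fst_assoc, zero_comp]
  by_contra hY
  have hf : f ≠ 0 := fun h => hY (IsZero.of_mono_eq_zero (j ≫ i)
    ((cancel_epi (pullback.fst k (cokernel.π i))).1 (by simpa using h)))
  have := hX (pullback.snd k (cokernel.π i)) inferInstance f hf
  exact hH (IsZero.of_mono_eq_zero l (zero_of_comp_mono f hlf))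

theorem of_uniform {X : C} (hu : Uniform X)
    (hc : ∀ ⦃H Y : C⦄ (i : H ⟶ X) [Mono i], ¬IsZero H →
      ∀ (j : Y ⟶ H) [Mono j] (k : Y ⟶ cokernel i) [Mono k], IsZero Y) :
    Monoform X := by
  intro H i _ f hf
  refine Preadditive.mono_of_isZero_kernel f (by_contra fun hK => ?_)
  have hI : ¬IsZero (Abelian.image f) := fun h =>
    hf (by rw [← Abelian.image.fac f, h.eq_of_src (Abelian.image.ι f) 0, comp_zero])
  -- `im f ≅ H / ker f ↪ X / ker f`
  let e : Abelian.image f ⟶ cokernel (kernel.ι f ≫ i) :=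
    (Abelian.coimageIsoImage f).inv ≫ cokernel.map (kernel.ι f) _ (𝟙 _) i (by simp)
  exact hu.not_isZero_pullback (kernel.ι f ≫ i) (Abelian.image.ι f) hK hI
    (hc (kernel.ι f ≫ i) hK (pullback.fst _ _) (pullback.snd _ _ ≫ e))

end Monoform

theorem monoform_iff_uniform_and_no_common_subobject_general {C : Type u} [Category.{v} C]
    [Abelian C] (X : C) :
    Monoform X ↔
      (Uniform X ∧
        ∀ (H : C) (i : H ⟶ X), Mono i → ¬ IsZero H →
          ∀ Y : C, (∃ j : Y ⟶ H, Mono j) → (∃ k : Y ⟶ cokernel i, Mono k) → IsZero Y) :=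
  ⟨fun hX => ⟨hX.uniform, fun _ i _ hH _ ⟨j, _⟩ ⟨k, _⟩ =>
      hX.isZero_of_mono_of_mono_cokernel i hH j k⟩,
    fun ⟨hu, hc⟩ => Monoform.of_uniform hu fun H Y i _ hH j _ k _ =>
      hc H i inferInstance hH Y ⟨j, inferInstance⟩ ⟨k, inferInstance⟩⟩

/-- An object `X` of a Grothendieck category is monoform if and only if `X` is uniform and
for every nonzero subobject `H ⊆ X`, the only object isomorphic both to a subobject of `H`
and to a subobject of `X/H` is the zero object. -/
theorem monoform_iff_uniform_and_no_common_subobject {C : Type u} [Category.{v} C]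
    [Abelian C] [GrothendieckCategory C] (X : C) :
    Monoform X ↔
      (Uniform X ∧
        ∀ (H : C) (i : H ⟶ X), Mono i → ¬ IsZero H →
          ∀ Y : C, (∃ j : Y ⟶ H, Mono j) → (∃ k : Y ⟶ cokernel i, Mono k) → IsZero Y) :=
  monoform_iff_uniform_and_no_common_subobject_general X
end

section
/- Atom-equivalence is an equivalence relation on the class of monoform objects of a Grothendieck category. -/
/-!
For transitivity, given monomorphisms `X ← H₁ → Y ← H₂ → Z`, the pullback `H₁ ×_Y H₂` embeds
into both `X` and `Z`, so it suffices that it is nonzero. If it were zero, `H₁ ⊞ H₂` would embed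
into `Y`; monoformity of `Y` then makes the nonzero morphism `H₁ ⊞ H₂ → H₁ → Y` a monomorphism,
although it kills `H₂`.
-/

open CategoryTheory Category Limits

universe v u

/-- Two objects are atom-equivalent if there is a nonzero object admitting monomorphisms
into both. -/
def AtomEquiv {C : Type u} [Category.{v} C] [Abelian C] (X X' : C) : Prop :=
  ∃ (H : C) (f : H ⟶ X) (g : H ⟶ X'), ¬ IsZero H ∧ Mono f ∧ Mono g

section

variable {C : Type u} [Category.{v} C] [Abelian C]

lemma mono_biprod_desc_of_isZero_pullback {Y H₁ H₂ : C} (f : H₁ ⟶ Y) (g : H₂ ⟶ Y)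
    (hP : IsZero (pullback f g)) : Mono (biprod.desc f g) := by
  refine Preadditive.mono_of_cancel_zero _ fun k hk => ?_
  have hw : (k ≫ biprod.fst) ≫ f = (-(k ≫ biprod.snd)) ≫ g := by
    rw [← sub_eq_zero, Preadditive.neg_comp, sub_neg_eq_add, assoc, assoc,
      ← Preadditive.comp_add, ← biprod.desc_eq, hk]
  have hlift := hP.eq_of_tgt (pullback.lift _ _ hw) 0
  have hfst : k ≫ biprod.fst = 0 := by
    simpa [hlift] using (pullback.lift_fst _ _ hw).symm
  have hsnd : k ≫ biprod.snd = 0 := by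
    simpa [hlift] using (pullback.lift_snd _ _ hw).symm
  ext <;> simp [hfst, hsnd]

lemma Monoform.isZero_of_mono_biprod {Y H₁ H₂ : C} (hY : Monoform Y) (u : H₁ ⊞ H₂ ⟶ Y)
    [Mono u] (h₁ : ¬ IsZero H₁) : IsZero H₂ := by
  have hne : (biprod.fst : H₁ ⊞ H₂ ⟶ H₁) ≫ biprod.inl ≫ u ≠ 0 := fun h =>
    h₁ (IsZero.of_mono_eq_zero (biprod.inl ≫ u) (by simpa using biprod.inl ≫= h))
  have := hY u inferInstance _ hne
  refine IsZero.of_mono_eq_zero (biprod.inr : H₂ ⟶ H₁ ⊞ H₂) ?_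
  rw [← cancel_mono (biprod.fst ≫ biprod.inl ≫ u)]
  simp

lemma Monoform.not_isZero_pullback {Y H₁ H₂ : C} (hY : Monoform Y) (f : H₁ ⟶ Y) (g : H₂ ⟶ Y)
    (h₁ : ¬ IsZero H₁) (h₂ : ¬ IsZero H₂) : ¬ IsZero (pullback f g) := fun hP =>
  have := mono_biprod_desc_of_isZero_pullback f g hP
  h₂ (hY.isZero_of_mono_biprod (biprod.desc f g) h₁)

end

theorem atomEquiv_equivalence_general {C : Type u} [Category.{v} C] [Abelian C] :
    Equivalence (fun X Y : {X : C // Monoform X ∧ ¬ IsZero X} => AtomEquiv X.1 Y.1) := by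
  refine ⟨fun X => ?_, fun ⟨H, f, g, hH, hf, hg⟩ => ⟨H, g, f, hH, hg, hf⟩, ?_⟩
  · exact ⟨X.1, 𝟙 X.1, 𝟙 X.1, X.2.2, inferInstance, inferInstance⟩
  · rintro _ Y _ ⟨_, f₁, g₁, hH₁, _, _⟩ ⟨_, f₂, g₂, hH₂, _, _⟩
    exact ⟨pullback g₁ f₂, pullback.fst g₁ f₂ ≫ f₁, pullback.snd g₁ f₂ ≫ g₂,
      Y.2.1.not_isZero_pullback g₁ f₂ hH₁ hH₂, mono_comp _ _, mono_comp _ _⟩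

/-- Atom-equivalence is an equivalence relation on the (nonzero) monoform objects of a
Grothendieck category. -/
theorem atomEquiv_equivalence {C : Type u} [Category.{v} C] [Abelian C]
    [GrothendieckCategory C] :
    Equivalence (fun X Y : {X : C // Monoform X ∧ ¬ IsZero X} => AtomEquiv X.1 Y.1) :=
  atomEquiv_equivalence_general
end

section
/- Let G be a Grothendieck category and let X be an object such that there exists a hereditary torsion pair (T, F) with X ∈ F and Q(X) simple in G/T (where Q is the quotient functor). Then X is monoform. -/
open CategoryTheory Category Limits

universe v₂ u₂ v u

/-- A torsion pair is hereditary if the torsion class is closed under subobjects. -/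
def TorsionPair.Hereditary {C : Type u} [Category.{v} C] [Abelian C]
    (tp : TorsionPair C) : Prop :=
  ∀ ⦃X Y : C⦄ (i : Y ⟶ X), Mono i → X ∈ tp.torsion → Y ∈ tp.torsion

/-- `Q : C ⥤ D` is the Gabriel quotient functor of `C` by the (localizing) torsion class
of the hereditary torsion pair `tp`: it is exact, admits a fully faithful right adjoint
(the section functor), and its kernel is precisely the torsion class. -/
structure IsGabrielQuotient {C : Type u} [Category.{v} C] [Abelian C]
    {D : Type u₂} [Category.{v₂} D] [Abelian D] (tp : TorsionPair C)
    (Q : C ⥤ D) (S : D ⥤ C) : Prop where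
  exactQ : Q.Additive ∧ Nonempty (PreservesFiniteLimits Q) ∧
    Nonempty (PreservesFiniteColimits Q)
  adj : Nonempty (Q ⊣ S)
  fullS : S.Full
  faithfulS : S.Faithful
  kernel : ∀ X : C, IsZero (Q.obj X) ↔ X ∈ tp.torsion

/-- An object `X` is `(T,F)`-cocritical if `X ∈ F` and every proper quotient of `X`
lies in `T`. -/
def Cocritical {C : Type u} [Category.{v} C] [Abelian C]
    (tp : TorsionPair C) (X : C) : Prop :=
  X ∈ tp.torsionFree ∧ ∀ (Z : C) (p : X ⟶ Z), Epi p → ¬ IsIso p → Z ∈ tp.torsion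

/-- If there is a hereditary torsion pair `(T, F)` in a Grothendieck category, with Gabriel
quotient functor `Q`, such that `X ∈ F` and `Q(X)` is simple in the quotient category,
then `X` is monoform. -/
theorem monoform_of_torsionFree_simple_image {C : Type u} [Category.{v} C]
    [Abelian C] [GrothendieckCategory C] (X : C)
    (h : ∃ (D : Type u₂) (_ : Category.{v₂} D) (_ : Abelian D) (tp : TorsionPair C)
      (Q : C ⥤ D) (S : D ⥤ C), tp.Hereditary ∧ IsGabrielQuotient tp Q S ∧
      X ∈ tp.torsionFree ∧ Simple (Q.obj X)) :
    Monoform X := by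
  obtain ⟨D, _, _, tp, Q, S, _, hQ, hXF, hsimple⟩ := h
  obtain ⟨hadd, ⟨hlim⟩, ⟨hcolim⟩⟩ := hQ.exactQ
  intro H i hi f hf
  -- a subobject of X whose image under Q is zero is itself zero
  have key : ∀ (Y : C) (g : Y ⟶ X), Mono g → IsZero (Q.obj Y) → IsZero Y := by
    intro Y g hg hz
    have hY : Y ∈ tp.torsion := (hQ.kernel Y).mp hz
    have hg0 : g = 0 := tp.hom_vanish hY hXF g
    rw [IsZero.iff_id_eq_zero, ← cancel_mono g, hg0, comp_zero, comp_zero]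
  -- Q(H) is not zero
  have hQH : ¬ IsZero (Q.obj H) := by
    intro hz
    exact hf ((key H i hi hz).eq_of_src f 0)
  haveI : Mono (Q.map i) := inferInstance
  -- Q(i) is nonzero, hence an iso, hence Q(H) is simple
  have hQi : Q.map i ≠ 0 := by
    intro h0
    apply hQH
    rw [IsZero.iff_id_eq_zero, ← cancel_mono (Q.map i), h0, comp_zero, comp_zero]
  haveI : IsIso (Q.map i) := isIso_of_mono_of_nonzero hQi
  haveI : Simple (Q.obj H) := Simple.of_iso (asIso (Q.map i))
  -- Q(f) is nonzero
  have hQf : Q.map f ≠ 0 := by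
    intro h0
    apply hf
    have hfac : Q.map (factorThruImage f) ≫ Q.map (image.ι f) = 0 := by
      rw [← Q.map_comp, image.fac f, h0]
    have him : Q.map (image.ι f) = 0 := by
      rw [← cancel_epi (Q.map (factorThruImage f)), hfac, comp_zero]
    have hzim : IsZero (Q.obj (image f)) := by
      rw [IsZero.iff_id_eq_zero, ← cancel_mono (Q.map (image.ι f)), him, comp_zero,
        comp_zero]
    have : IsZero (image f) := key (image f) (image.ι f) inferInstance hzim
    rw [← image.fac f, this.eq_of_tgt (factorThruImage f) 0, zero_comp]
  -- hence Q(f) is mono (source is simple)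
  haveI : Mono (Q.map f) := mono_of_nonzero_from_simple hQf
  -- so Q(kernel f) ≅ kernel (Q f) ≅ 0, hence kernel f = 0, hence f mono
  have hzk : IsZero (Q.obj (kernel f)) := by
    have : IsZero (kernel (Q.map f)) :=
      (isZero_zero D).of_iso (kernel.ofMono (Q.map f))
    exact this.of_iso (PreservesKernel.iso Q f)
  have hk : IsZero (kernel f) :=
    key (kernel f) (kernel.ι f ≫ i) inferInstance hzk
  exact Abelian.mono_of_kernel_ι_eq_zero f (hk.eq_of_src _ _)
end

section
/- Let G be a Grothendieck category. The assignment sending the atom-equivalence class [X] of a monoform object X to the injective envelope E(X) is a well-defined injective map from the atom spectrum of G to the set of isomorphism classes of indecomposable injective objects of G. -/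
open CategoryTheory Category Limits

universe v u

/-- `u : X ⟶ E` is an injective envelope of `X`: `E` is injective and `u` is an essential
monomorphism. -/
def IsInjectiveEnvelope {C : Type u} [Category.{v} C] [Abelian C]
    {X E : C} (u : X ⟶ E) : Prop :=
  Injective E ∧ Mono u ∧ ∀ ⦃Y : C⦄ (g : E ⟶ Y), Mono (u ≫ g) → Mono g

/-- An object is indecomposable if it is nonzero and admits no decomposition as a
biproduct of two nonzero objects. -/
def IndecomposableObj {C : Type u} [Category.{v} C] [Abelian C] (E : C) : Prop :=
  ¬ IsZero E ∧ ∀ Y Z : C, Nonempty (E ≅ Y ⊞ Z) → IsZero Y ∨ IsZero Z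

section AuxLemmas
variable {C : Type u} [Category.{v} C] [Abelian C]

lemma isZero_of_mono_eq_zero {A B : C} (f : A ⟶ B) [Mono f] (h : f = 0) : IsZero A := by
  rw [IsZero.iff_id_eq_zero]
  exact (cancel_mono f).1 (by simp [h])

/-- Essential extensions: every nonzero subobject of `E` meets `X` nontrivially. -/
lemma pullback_envelope_ne_zero {X E S : C} (u : X ⟶ E) [Mono u]
    (hess : ∀ ⦃Y : C⦄ (g : E ⟶ Y), Mono (u ≫ g) → Mono g)
    (s : S ⟶ E) [Mono s] (hS : ¬ IsZero S) : ¬ IsZero (pullback u s) := by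
  intro hP
  have hmono : Mono (u ≫ cokernel.π s) := by
    rw [Preadditive.mono_iff_cancel_zero]
    intro W w hw
    have hw' : (w ≫ u) ≫ cokernel.π s = 0 := by simpa using hw
    have hcomm : w ≫ u = Abelian.monoLift s (w ≫ u) hw' ≫ s :=
      (Abelian.monoLift_comp s (w ≫ u) hw').symm
    have hl : pullback.lift w (Abelian.monoLift s (w ≫ u) hw') hcomm ≫ pullback.fst u s = w :=
      pullback.lift_fst _ _ _
    rw [← hl, hP.eq_of_tgt (pullback.lift w _ hcomm) 0, zero_comp]
  have := hess _ hmono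
  exact hS (isZero_of_mono_eq_zero s ((cancel_mono (cokernel.π s)).1 (by simp)))

/-- A monoform object is uniform: two nonzero subobjects meet nontrivially. -/
lemma monoform_uniform {X A B : C} (hX : Monoform X) (a : A ⟶ X) (b : B ⟶ X)
    [Mono a] [Mono b] (hA : ¬ IsZero A) (hB : ¬ IsZero B) : ¬ IsZero (pullback a b) := by
  intro hP
  have hd : Mono (biprod.desc a b) := by
    rw [Preadditive.mono_iff_cancel_zero]
    intro W k hk
    have hsum : (k ≫ biprod.fst) ≫ a + (k ≫ biprod.snd) ≫ b = 0 := by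
      have h : k ≫ 𝟙 (A ⊞ B) ≫ biprod.desc a b = 0 := by simpa using hk
      rw [← biprod.total, Preadditive.add_comp, Preadditive.comp_add, Category.assoc,
        Category.assoc, biprod.inl_desc, biprod.inr_desc, ← Category.assoc,
        ← Category.assoc] at h
      exact h
    have hcomm : (k ≫ biprod.fst) ≫ a = (-(k ≫ biprod.snd)) ≫ b := by
      rw [Preadditive.neg_comp, eq_neg_iff_add_eq_zero]; exact hsum
    have h1 : k ≫ biprod.fst = 0 := by
      rw [← pullback.lift_fst _ _ hcomm, hP.eq_of_tgt (pullback.lift _ _ hcomm) 0, zero_comp]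
    have h2 : k ≫ biprod.snd = 0 := by
      have := pullback.lift_snd _ _ hcomm
      rw [hP.eq_of_tgt (pullback.lift _ _ hcomm) 0, zero_comp] at this
      simpa using this.symm
    apply biprod.hom_ext <;> simp [h1, h2]
  have ha0 : biprod.desc a (0 : B ⟶ X) ≠ 0 := by
    intro h0
    have : a = 0 := by
      have := congrArg (fun t => biprod.inl ≫ t) h0
      simpa using this
    exact hA (isZero_of_mono_eq_zero a this)
  have hmf : Mono (biprod.desc a (0 : B ⟶ X)) := hX (biprod.desc a b) hd _ ha0
  have : biprod.inr ≫ biprod.desc a (0 : B ⟶ X) = 0 := by simp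
  have hinr : (biprod.inr : B ⟶ A ⊞ B) = 0 := (cancel_mono (biprod.desc a (0 : B ⟶ X))).1 (by simp)
  exact hB (isZero_of_mono_eq_zero (biprod.inr : B ⟶ A ⊞ B) hinr)

end AuxLemmas

/-- Part 1: the injective envelope of a nonzero monoform object is an indecomposable
injective object. -/
lemma envelope_injective_indecomposable {C : Type u} [Category.{v} C] [Abelian C]
    {X E : C} (u : X ⟶ E) (hXm : Monoform X) (hXne : ¬ IsZero X)
    (hEnv : IsInjectiveEnvelope u) : Injective E ∧ IndecomposableObj E := by
  obtain ⟨hInj, hMu, hess⟩ := hEnv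
  haveI := hMu
  refine ⟨hInj, ?_, ?_⟩
  · intro hE
    exact hXne (isZero_of_mono_eq_zero u (hE.eq_of_tgt u 0))
  · rintro Y Z ⟨e⟩
    by_contra hcon
    push_neg at hcon
    obtain ⟨hY, hZ⟩ := hcon
    set iY : Y ⟶ E := biprod.inl ≫ e.inv with hiY
    set iZ : Z ⟶ E := biprod.inr ≫ e.inv with hiZ
    haveI : Mono iY := mono_comp _ _
    haveI : Mono iZ := mono_comp _ _
    have hPY : ¬ IsZero (pullback u iY) := pullback_envelope_ne_zero u hess iY hY
    have hPZ : ¬ IsZero (pullback u iZ) := pullback_envelope_ne_zero u hess iZ hZ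
    have hW : ¬ IsZero (pullback (pullback.fst u iY) (pullback.fst u iZ)) :=
      monoform_uniform hXm _ _ hPY hPZ
    apply hW
    set w1 := pullback.fst (pullback.fst u iY) (pullback.fst u iZ) with hw1def
    set w2 := pullback.snd (pullback.fst u iY) (pullback.fst u iZ) with hw2def
    set a := w1 ≫ pullback.snd u iY with hadef
    set b := w2 ≫ pullback.snd u iZ with hbdef
    have hab : a ≫ iY = b ≫ iZ := by
      rw [hadef, hbdef, Category.assoc, Category.assoc, ← pullback.condition,
        ← pullback.condition, ← Category.assoc, ← Category.assoc, hw1def, hw2def,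
        pullback.condition]
    have hab' : a ≫ biprod.inl = b ≫ biprod.inr := by
      have : (a ≫ biprod.inl) ≫ e.inv = (b ≫ biprod.inr) ≫ e.inv := by
        simpa [hiY, hiZ, Category.assoc] using hab
      exact (cancel_mono e.inv).1 this
    have ha : a = 0 := by
      have := congrArg (fun t => t ≫ (biprod.fst : Y ⊞ Z ⟶ Y)) hab'
      simpa [Category.assoc] using this
    have hw1 : w1 ≫ (pullback.fst u iY ≫ u) = 0 := by
      rw [pullback.condition, ← Category.assoc, ← hadef, ha, zero_comp]
    haveI : Mono (pullback.fst u iY ≫ u) := mono_comp _ _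
    have hw10 : w1 = 0 := (cancel_mono (pullback.fst u iY ≫ u)).1 (by simpa using hw1)
    exact isZero_of_mono_eq_zero w1 hw10

/-- Sending the atom `[X]` of a (nonzero) monoform object `X` to its injective envelope
`E(X)` gives a well-defined injective map from the atom spectrum of a Grothendieck
category to the set of isomorphism classes of indecomposable injective objects:
the injective envelope of a monoform object is an indecomposable injective, and two
monoform objects are atom-equivalent if and only if their injective envelopes are
isomorphic. -/
theorem atomSpectrum_to_indecomposable_injectives_well_defined_injective
    {C : Type u} [Category.{v} C] [Abelian C] [GrothendieckCategory C] :
    (∀ (X E : C) (u : X ⟶ E), Monoform X → ¬ IsZero X → IsInjectiveEnvelope u →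
      Injective E ∧ IndecomposableObj E) ∧
    (∀ (X X' E E' : C) (u : X ⟶ E) (u' : X' ⟶ E'),
      Monoform X → ¬ IsZero X → Monoform X' → ¬ IsZero X' →
      IsInjectiveEnvelope u → IsInjectiveEnvelope u' →
      (AtomEquiv X X' ↔ Nonempty (E ≅ E'))) := by
  constructor
  · intro X E u hXm hXne hEnv
    exact envelope_injective_indecomposable u hXm hXne hEnv
  · intro X X' E E' u u' hXm hXne hX'm hX'ne hEnv hEnv'
    have hInd' := envelope_injective_indecomposable u' hX'm hX'ne hEnv'
    obtain ⟨hInj, hMu, hess⟩ := hEnv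
    obtain ⟨hInj', hMu', hess'⟩ := hEnv'
    haveI := hMu; haveI := hMu'; haveI := hInj; haveI := hInj'
    constructor
    · rintro ⟨H, f, g, hH, hf, hg⟩
      haveI := hf; haveI := hg
      haveI : Mono (f ≫ u) := mono_comp _ _
      set φ : E ⟶ E' := Injective.factorThru (g ≫ u') (f ≫ u) with hφdef
      have hfac : (f ≫ u) ≫ φ = g ≫ u' := Injective.comp_factorThru _ _
      -- the kernel of `u ≫ φ` is zero
      have hK : IsZero (kernel (u ≫ φ)) := by
        by_contra hK
        have hP : ¬ IsZero (pullback (kernel.ι (u ≫ φ)) f) :=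
          monoform_uniform hXm _ _ hK hH
        apply hP
        have hzero : pullback.snd (kernel.ι (u ≫ φ)) f ≫ (g ≫ u') = 0 := by
          rw [← hfac]
          have : pullback.snd (kernel.ι (u ≫ φ)) f ≫ (f ≫ u) ≫ φ =
              (pullback.snd (kernel.ι (u ≫ φ)) f ≫ f) ≫ (u ≫ φ) := by
            simp [Category.assoc]
          rw [this, ← pullback.condition, Category.assoc, kernel.condition, comp_zero]
        haveI : Mono (g ≫ u') := mono_comp _ _
        exact isZero_of_mono_eq_zero _ ((cancel_mono (g ≫ u')).1 (by simpa using hzero))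
      have hMuφ : Mono (u ≫ φ) := by
        rw [Preadditive.mono_iff_cancel_zero]
        intro W w hw
        rw [← kernel.lift_ι (u ≫ φ) w hw, hK.eq_of_tgt (kernel.lift (u ≫ φ) w hw) 0, zero_comp]
      haveI hMφ : Mono φ := hess φ hMuφ
      -- retraction of φ
      set r : E' ⟶ E := Injective.factorThru (𝟙 E) φ with hrdef
      have hr : φ ≫ r = 𝟙 E := Injective.comp_factorThru _ _
      have hsub : (𝟙 E' - r ≫ φ) ≫ r = 0 := by
        rw [Preadditive.sub_comp, Category.id_comp, Category.assoc, hr, Category.comp_id, sub_self]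
      -- E' decomposes as E ⊞ kernel r
      have hiso : Nonempty (E' ≅ E ⊞ kernel r) := by
        refine ⟨⟨biprod.lift r (kernel.lift r (𝟙 E' - r ≫ φ) hsub),
          biprod.desc φ (kernel.ι r), ?_, ?_⟩⟩
        · rw [biprod.lift_desc, kernel.lift_ι]
          simp
        · apply biprod.hom_ext'
          · apply biprod.hom_ext
            · simp [hr]
            · rw [← cancel_mono (kernel.ι r)]
              simp [Preadditive.comp_sub]
              rw [← Category.assoc φ r φ, hr, Category.id_comp, sub_self]
          · apply biprod.hom_ext
            · simp [kernel.condition]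
            · rw [← cancel_mono (kernel.ι r)]
              simp [kernel.condition_assoc, Preadditive.comp_sub]
      rcases hInd'.2.2 E (kernel r) hiso with hE | hker
      · exfalso
        have : ¬ IsZero E := by
          intro hE0
          exact hXne (isZero_of_mono_eq_zero u (hE0.eq_of_tgt u 0))
        exact this hE
      · -- kernel r = 0 so r is mono, hence iso, hence φ iso
        haveI : Mono r := by
          rw [Preadditive.mono_iff_cancel_zero]
          intro W w hw
          rw [← kernel.lift_ι r w hw, hker.eq_of_tgt (kernel.lift r w hw) 0, zero_comp]
        haveI : IsSplitEpi r := ⟨⟨⟨φ, hr⟩⟩⟩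
        haveI : IsIso r := isIso_of_mono_of_isSplitEpi r
        have hφr : φ = inv r := by
          rw [← Category.comp_id φ, ← IsIso.hom_inv_id r, ← Category.assoc, hr, Category.id_comp]
        haveI : IsIso φ := by rw [hφr]; infer_instance
        exact ⟨asIso φ⟩
    · rintro ⟨e⟩
      haveI : Mono (u ≫ e.hom) := mono_comp _ _
      have hP : ¬ IsZero (pullback u' (u ≫ e.hom)) :=
        pullback_envelope_ne_zero u' hess' (u ≫ e.hom) hXne
      exact ⟨pullback u' (u ≫ e.hom), pullback.snd u' (u ≫ e.hom),
        pullback.fst u' (u ≫ e.hom), hP, inferInstance, inferInstance⟩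
end

section
/- Let G be a locally noetherian Grothendieck category. Then the map from the atom spectrum of G to the set of isomorphism classes of indecomposable injective objects, sending the atom [X] of a monoform object X to E(X), is a bijection. -/
open CategoryTheory Category Limits

universe v u

/-- A Grothendieck category is locally noetherian if it has a generating (separating) set
of noetherian objects. -/
def LocallyNoetherian (C : Type u) [Category.{v} C] [Abelian C] : Prop :=
  ∃ 𝒢 : Set C, ObjectProperty.IsSeparating (fun X => X ∈ 𝒢) ∧ ∀ G ∈ 𝒢, IsNoetherianObject G

/-!
A monoform object is uniform in a strong sense: every nonzero `H ↪ X` is an essential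
monomorphism. So a common nonzero subobject `H` of `X` and `X'` has both `E(X)` and `E(X')` as
injective envelopes, which are unique up to isomorphism; conversely `X ↪ E(X) ≅ E(X')` meets the
essential subobject `X'` of `E(X')` in a nonzero common subobject.

For surjectivity, some noetherian generator `G` maps nontrivially to the indecomposable
injective `E`; among the nonzero maps into `E` from subobjects of `G`, one with maximal kernel has
a monoform image `X`. It remains to see that `X ↪ E` is essential, i.e. that nonzero subobjects
of `E` cannot be disjoint. By AB5, Zorn's lemma applies to subobjects disjoint from a given one
and yields subobjects `P`, `K` of `E` that are maximal disjoint from each other; injectivity of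
`E` makes `P` a direct summand, so `P = E` and `K = 0`.
-/

variable {C : Type u} [Category.{v} C]

def IsEssential {X E : C} (u : X ⟶ E) : Prop :=
  ∀ ⦃Y : C⦄ (g : E ⟶ Y), Mono (u ≫ g) → Mono g

lemma IsEssential.comp {H X E : C} {f : H ⟶ X} {u : X ⟶ E} (hf : IsEssential f)
    (hu : IsEssential u) : IsEssential (f ≫ u) :=
  fun _ g hg => hu g (hf (u ≫ g) (by simpa only [assoc] using hg))

variable [Abelian C]

lemma Monoform.isEssential {X H : C} (hX : Monoform X) (f : H ⟶ X) [Mono f] (hH : ¬ IsZero H) :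
    IsEssential f := by
  -- As `f ≫ g` is mono, `H ⊞ ker g ⟶ X` is mono; monoformness makes its nonzero component
  -- `fst ≫ f` mono too, which forces `ker g = 0`.
  intro Y g hg
  have hdesc : Mono (biprod.desc f (kernel.ι g)) := by
    refine Preadditive.mono_of_cancel_zero _ fun {T} t ht => ?_
    have hfst : t ≫ biprod.fst = 0 := by
      rw [← cancel_mono (f ≫ g)]
      simpa [biprod.desc_eq] using congrArg (· ≫ g) ht
    have hsnd : t ≫ biprod.snd = 0 := by
      rw [← cancel_mono (kernel.ι g)]
      simpa [biprod.desc_eq, reassoc_of% hfst] using ht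
    exact biprod.hom_ext _ _ (by simpa using hfst) (by simpa using hsnd)
  have hne : (biprod.fst ≫ f : H ⊞ kernel g ⟶ X) ≠ 0 := fun h =>
    hH (IsZero.of_mono_eq_zero f (by simpa using congrArg (biprod.inl ≫ ·) h))
  have := hX _ hdesc _ hne
  have hinr : (biprod.inr : kernel g ⟶ H ⊞ kernel g) = 0 := by
    rw [← cancel_mono (biprod.fst ≫ f)]; simp
  have hker : IsZero (kernel g) := by
    rw [IsZero.iff_id_eq_zero, ← biprod.inr_snd, hinr, zero_comp]
  exact Preadditive.mono_of_isZero_kernel g hker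

lemma mono_comp_cokernel_π_of_isZero_pullback {A B E : C} (a : A ⟶ E) (b : B ⟶ E) [Mono b]
    (h : IsZero (pullback a b)) : Mono (a ≫ cokernel.π b) := by
  refine Preadditive.mono_of_cancel_zero _ fun {T} t ht => ?_
  have hlift : t ≫ a = Abelian.monoLift b (t ≫ a) (by simpa using ht) ≫ b :=
    (Abelian.monoLift_comp _ _ _).symm
  rw [← pullback.lift_fst _ _ hlift, h.eq_of_tgt (pullback.lift _ _ _) 0, zero_comp]

lemma IsEssential.not_isZero_pullback {X E B : C} {u : X ⟶ E} (hu : IsEssential u)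
    (v : B ⟶ E) [Mono v] (hB : ¬ IsZero B) : ¬ IsZero (pullback u v) := fun h => by
  have := hu _ (mono_comp_cokernel_π_of_isZero_pullback u v h)
  exact hB (IsZero.of_mono_eq_zero v (zero_of_comp_mono (cokernel.π v) (cokernel.condition v)))

lemma IsInjectiveEnvelope.nonempty_iso {H E E' : C} {u : H ⟶ E} {u' : H ⟶ E'}
    (hu : IsInjectiveEnvelope u) (hu' : IsInjectiveEnvelope u') : Nonempty (E ≅ E') := by
  obtain ⟨_, _, hess⟩ := hu
  obtain ⟨_, _, hess'⟩ := hu'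
  let φ : E ⟶ E' := Injective.factorThru u' u
  have hφ : u ≫ φ = u' := Injective.comp_factorThru u' u
  have : Mono φ := hess φ (hφ ▸ inferInstance)
  let ψ : E' ⟶ E := Injective.factorThru (𝟙 E) φ
  have hψ : φ ≫ ψ = 𝟙 E := Injective.comp_factorThru (𝟙 E) φ
  have : Mono ψ := hess' ψ (by rw [← hφ, assoc, hψ, comp_id]; infer_instance)
  have : IsSplitEpi ψ := ⟨⟨⟨φ, hψ⟩⟩⟩
  have : IsIso ψ := isIso_of_mono_of_epi ψ
  exact ⟨(asIso ψ).symm⟩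

lemma atomEquiv_iff_nonempty_iso {X X' E E' : C} {u : X ⟶ E} {u' : X' ⟶ E'}
    (hX : Monoform X) (hX' : Monoform X') (hX0 : ¬ IsZero X)
    (hu : IsInjectiveEnvelope u) (hu' : IsInjectiveEnvelope u') :
    AtomEquiv X X' ↔ Nonempty (E ≅ E') := by
  have := hu.2.1
  have := hu'.2.1
  constructor
  · rintro ⟨H, f, g, hH, hf, hg⟩
    exact IsInjectiveEnvelope.nonempty_iso (u := f ≫ u) (u' := g ≫ u')
      ⟨hu.1, mono_comp _ _, (hX.isEssential f hH).comp hu.2.2⟩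
      ⟨hu'.1, mono_comp _ _, (hX'.isEssential g hH).comp hu'.2.2⟩
  · rintro ⟨e⟩
    exact ⟨pullback u' (u ≫ e.hom), pullback.snd _ _, pullback.fst _ _,
      IsEssential.not_isZero_pullback hu'.2.2 _ hX0, inferInstance, inferInstance⟩

lemma disjoint_mk_kernelSubobject_iff {A E Y : C} (a : A ⟶ E) [Mono a] (g : E ⟶ Y) :
    Disjoint (Subobject.mk a) (kernelSubobject g) ↔ Mono (a ≫ g) := by
  rw [disjoint_iff]
  constructor
  · intro h
    refine Preadditive.mono_of_cancel_zero _ fun {T} t ht => ?_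
    have hf : (Subobject.mk a ⊓ kernelSubobject g).Factors (t ≫ a) :=
      (Subobject.inf_factors _).2
        ⟨Subobject.factors_of_factors_right t (Subobject.mk_factors_self a),
          kernelSubobject_factors g _ (by simpa using ht)⟩
    rw [h, Subobject.bot_factors_iff_zero] at hf
    exact zero_of_comp_mono a hf
  · intro h
    set S := Subobject.mk a ⊓ kernelSubobject g
    have h0 : Subobject.ofLEMk S a inf_le_left ≫ a ≫ g = 0 := by
      rw [← assoc, Subobject.ofLEMk_comp, ← Subobject.ofLE_arrow (inf_le_right : S ≤ _), assoc,
        kernelSubobject_arrow_comp, comp_zero]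
    rw [← Subobject.mk_arrow S, Subobject.mk_eq_bot_iff_zero,
      ← Subobject.ofLEMk_comp (inf_le_left : S ≤ _), zero_of_comp_mono _ h0, zero_comp]

lemma kernelSubobject_cokernel_π_arrow {E : C} (K : Subobject E) :
    kernelSubobject (cokernel.π K.arrow) = K :=
  le_antisymm
    (Subobject.le_of_comm (Abelian.monoLift K.arrow _ (kernelSubobject_arrow_comp _))
      (Abelian.monoLift_comp _ _ _))
    (le_kernelSubobject _ _ (cokernel.condition _))

lemma disjoint_mk_iff_mono_comp_cokernel_π {A E : C} (a : A ⟶ E) [Mono a] (K : Subobject E) :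
    Disjoint (Subobject.mk a) K ↔ Mono (a ≫ cokernel.π K.arrow) := by
  conv_lhs => rw [← kernelSubobject_cokernel_π_arrow K]
  exact disjoint_mk_kernelSubobject_iff _ _

lemma disjoint_iff_mono_arrow_comp_cokernel_π {E : C} (S K : Subobject E) :
    Disjoint S K ↔ Mono (S.arrow ≫ cokernel.π K.arrow) := by
  simpa only [Subobject.mk_arrow] using disjoint_mk_iff_mono_comp_cokernel_π S.arrow K

lemma mono_of_kernelSubobject_eq_bot {E Y : C} (g : E ⟶ Y) (h : kernelSubobject g = ⊥) :
    Mono g :=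
  Preadditive.mono_of_cancel_zero _ fun t ht => by
    simpa [h, Subobject.bot_factors_iff_zero] using kernelSubobject_factors g t ht

lemma mono_of_kernelSubobject_comp_le {E Q Y : C} (p : E ⟶ Q) [Epi p] (g : Q ⟶ Y)
    (h : kernelSubobject (p ≫ g) ≤ kernelSubobject p) : Mono g := by
  refine Preadditive.mono_of_cancel_zero _ fun {T} t ht => ?_
  have hfac : (kernelSubobject (p ≫ g)).Factors (pullback.fst p t) :=
    kernelSubobject_factors _ _ (by rw [pullback.condition_assoc, ht, comp_zero])
  have h0 : pullback.snd p t ≫ t = 0 := by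
    rw [← pullback.condition, ← kernelSubobject_factors_iff]
    exact Subobject.factors_of_le _ h hfac
  exact zero_of_epi_comp _ h0

lemma CategoryTheory.Subobject.mk_eq_bot_iff_isZero_s14 {A E : C} (a : A ⟶ E) [Mono a] :
    Subobject.mk a = ⊥ ↔ IsZero A := by
  rw [Subobject.mk_eq_bot_iff_zero]
  exact ⟨IsZero.of_mono_eq_zero a, fun h => h.eq_of_src _ _⟩

lemma isEssential_arrow_comp_cokernel_π_of_maximal {E : C} {P K : Subobject E}
    (hK : Maximal (Disjoint P) K) : IsEssential (P.arrow ≫ cokernel.π K.arrow) := by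
  intro Y g hg
  have hdisj : Disjoint P (kernelSubobject (cokernel.π K.arrow ≫ g)) := by
    simpa only [Subobject.mk_arrow, assoc] using
      (disjoint_mk_kernelSubobject_iff P.arrow (cokernel.π K.arrow ≫ g)).2 (by simpa using hg)
  have hle : K ≤ kernelSubobject (cokernel.π K.arrow ≫ g) :=
    le_kernelSubobject _ _ (by rw [cokernel.condition_assoc, zero_comp])
  refine mono_of_kernelSubobject_comp_le (cokernel.π K.arrow) g ?_
  rw [kernelSubobject_cokernel_π_arrow]
  exact hK.2 hdisj hle

lemma isSplitMono_arrow_of_maximal_disjoint {E : C} [Injective E] {P K : Subobject E}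
    (hP : Maximal (Disjoint K) P) (hK : Maximal (Disjoint P) K) : IsSplitMono P.arrow := by
  -- `φ` extends `P ↪ E` along the essential mono `q : P ↪ E/K`; its image is disjoint from `K`
  -- and contains `P`, hence is `P`, and this gives the retraction.
  set q := P.arrow ≫ cokernel.π K.arrow
  have hqm : Mono q := (disjoint_iff_mono_arrow_comp_cokernel_π P K).1 hK.1
  have hq := isEssential_arrow_comp_cokernel_π_of_maximal hK
  let φ : cokernel K.arrow ⟶ E := Injective.factorThru P.arrow q
  have hφ : q ≫ φ = P.arrow := Injective.comp_factorThru _ _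
  have : Mono φ := hq φ (by rw [hφ]; infer_instance)
  have hφK : Mono (φ ≫ cokernel.π K.arrow) := hq _ (by rwa [← assoc, hφ])
  have hle : Subobject.mk φ ≤ P :=
    hP.2 ((disjoint_mk_iff_mono_comp_cokernel_π φ K).2 hφK).symm (Subobject.le_mk_of_comm q hφ)
  refine ⟨⟨⟨cokernel.π K.arrow ≫ Subobject.ofMkLE φ P hle, ?_⟩⟩⟩
  rw [← cancel_mono P.arrow, assoc, assoc, Subobject.ofMkLE_arrow, id_comp, ← assoc]
  exact hφ

lemma IndecomposableObj.isIso_of_isSplitMono {A E : C} (hE : IndecomposableObj E) (i : A ⟶ E)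
    [IsSplitMono i] (hA : ¬ IsZero A) : IsIso i := by
  have hb := isBilimitBinaryBiconeOfIsSplitMonoOfCokernel (cokernelIsCokernel i)
  rcases hE.2 _ _ ⟨biprod.uniqueUpToIso _ _ hb⟩ with h | h
  · exact absurd h hA
  · have := Preadditive.epi_of_isZero_cokernel' _ (cokernelIsCokernel i) h
    exact isIso_of_mono_of_epi i

section AB5

variable [HasFilteredColimits C] [AB5 C]

lemma exists_upperBound_mono_arrow_comp_of_directed {J : Type v} [Preorder J]
    [IsDirected J (· ≤ ·)] [Nonempty J] {E Y : C} (D : J →o Subobject E) (g : E ⟶ Y)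
    (hg : ∀ j, Mono ((D j).arrow ≫ g)) :
    ∃ W : Subobject E, (∀ j, D j ≤ W) ∧ Mono (W.arrow ≫ g) := by
  have := IsFiltered.isConnected J
  let F : J ⥤ C := D.monotone.functor ⋙ Subobject.underlying
  let ι : F ⟶ (Functor.const J).obj E :=
    { app := fun j => (D j).arrow
      naturality := fun _ _ _ => by
        simp only [F, Functor.comp_map, Functor.const_obj_map]
        exact (Subobject.underlying_arrow _).trans (comp_id _).symm }
  let φ : F ⟶ (Functor.const J).obj Y := ι ≫ (Functor.const J).map g
  have : ∀ j, Mono (φ.app j) := hg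
  have : Mono φ := NatTrans.mono_of_mono_app φ
  let f : colimit F ⟶ E := colimit.desc F (Cocone.mk E ι)
  -- AB5: a filtered colimit of the monomorphisms `D j ↪ Y` is a monomorphism.
  have : Mono (f ≫ g) := colim.map_mono' φ (colimit.isColimit F) (isColimitConstCocone J Y)
    (f ≫ g) (fun j => by
      change colimit.ι F j ≫ f ≫ g = (ι.app j ≫ g) ≫ 𝟙 Y
      rw [colimit.ι_desc_assoc, comp_id])
  have : Mono f := mono_of_mono f g
  refine ⟨Subobject.mk f,
    fun j => Subobject.le_mk_of_comm (colimit.ι F j) (colimit.ι_desc _ _), ?_⟩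
  rw [← Subobject.underlyingIso_hom_comp_eq_mk f, assoc]
  infer_instance

lemma exists_upperBound_mono_arrow_comp [WellPowered.{v} C] {E Y : C} (c : Set (Subobject E))
    (hc : IsChain (· ≤ ·) c) (hne : c.Nonempty) (g : E ⟶ Y)
    (hg : ∀ D ∈ c, Mono (D.arrow ≫ g)) :
    ∃ W : Subobject E, (∀ D ∈ c, D ≤ W) ∧ Mono (W.arrow ≫ g) := by
  have : Small.{v} c := inferInstance
  let e : Shrink.{v} c ≃o c := (orderIsoShrink c).symm
  have : Nonempty (Shrink.{v} c) := ⟨e.symm ⟨_, hne.some_mem⟩⟩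
  have : IsDirected (Shrink.{v} c) (· ≤ ·) := ⟨fun a b => by
    rcases hc.total (e a).2 (e b).2 with h | h
    · exact ⟨b, e.le_iff_le.1 h, le_rfl⟩
    · exact ⟨a, le_rfl, e.le_iff_le.1 h⟩⟩
  obtain ⟨W, hW, hWg⟩ := exists_upperBound_mono_arrow_comp_of_directed
    ((OrderHom.Subtype.val _).comp e.toOrderEmbedding.toOrderHom) g (fun j => hg _ (e j).2)
  exact ⟨W, fun D hD => by simpa using hW (e.symm ⟨D, hD⟩), hWg⟩

variable [WellPowered.{v} C]

lemma exists_le_maximal_disjoint {E : C} (P K : Subobject E) (h : Disjoint P K) :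
    ∃ K', K ≤ K' ∧ Maximal (Disjoint P) K' := by
  refine zorn_le_nonempty₀ _ (fun c hcs hc D hD => ?_) K h
  obtain ⟨W, hW, hWP⟩ := exists_upperBound_mono_arrow_comp c hc ⟨D, hD⟩ (cokernel.π P.arrow)
    (fun D' hD' => (disjoint_iff_mono_arrow_comp_cokernel_π _ _).1 (Disjoint.symm (hcs hD')))
  exact ⟨W, ((disjoint_iff_mono_arrow_comp_cokernel_π _ _).2 hWP).symm, hW⟩

lemma IndecomposableObj.eq_bot_of_disjoint {E : C} [Injective E] (hE : IndecomposableObj E)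
    {P K : Subobject E} (hP : P ≠ ⊥) (h : Disjoint P K) : K = ⊥ := by
  obtain ⟨K', hKK', hK'⟩ := exists_le_maximal_disjoint P K h
  obtain ⟨P', hPP', hP'⟩ := exists_le_maximal_disjoint K' P hK'.1.symm
  have hK'' : Maximal (Disjoint P') K' :=
    ⟨hP'.1.symm, fun _ hD hle => hK'.2 (hD.mono_left hPP') hle⟩
  have := isSplitMono_arrow_of_maximal_disjoint hP' hK''
  have hP'0 : ¬ IsZero (P' : C) := by
    rw [← Subobject.mk_eq_bot_iff_isZero_s14 P'.arrow, Subobject.mk_arrow]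
    exact ne_bot_of_le_ne_bot hP hPP'
  have hP'top : P' = ⊤ :=
    (Subobject.isIso_arrow_iff_eq_top P').1 (hE.isIso_of_isSplitMono _ hP'0)
  have hK'bot : K' = ⊥ := top_disjoint.1 (hP'top ▸ hK''.1)
  exact le_bot_iff.1 (hK'bot ▸ hKK')

lemma IndecomposableObj.isEssential {A E : C} [Injective E] (hE : IndecomposableObj E)
    (a : A ⟶ E) [Mono a] (hA : ¬ IsZero A) : IsEssential a := fun _ g hg =>
  mono_of_kernelSubobject_eq_bot g (hE.eq_bot_of_disjoint
    (by rwa [Ne, Subobject.mk_eq_bot_iff_isZero_s14]) ((disjoint_mk_kernelSubobject_iff a g).2 hg))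

end AB5

lemma monoform_image_of_maximal {G Y H : C} (η : H ⟶ G) [Mono η] (f : H ⟶ Y)
    (hmax : ∀ (H' : C) (η' : H' ⟶ G) [Mono η'] (f' : H' ⟶ Y), f' ≠ 0 →
      Subobject.mk (kernel.ι f ≫ η) ≤ Subobject.mk (kernel.ι f' ≫ η') →
      Subobject.mk (kernel.ι f' ≫ η') ≤ Subobject.mk (kernel.ι f ≫ η)) :
    Monoform (image f) := by
  -- A non-mono `g` would yield a nonzero map `f'` whose kernel strictly contains that of `f`.
  intro L j _ g hg
  let e := factorThruImage f
  let p₁ := pullback.fst j e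
  let p₂ := pullback.snd j e
  let f' := p₁ ≫ g ≫ image.ι f
  have hf' : f' ≠ 0 := fun h0 => hg (by
    rw [← cancel_mono (image.ι f), zero_comp, ← cancel_epi p₁, comp_zero]
    exact h0)
  have hKe : kernel.ι f ≫ e = 0 := by
    rw [← cancel_mono (image.ι f), assoc, image.fac, kernel.condition, zero_comp]
  let ξ : kernel f ⟶ pullback j e := pullback.lift 0 (kernel.ι f) (by rw [zero_comp, hKe])
  have hξ : ξ ≫ f' = 0 := by
    simp only [f', p₁, ξ, pullback.lift_fst_assoc, zero_comp]
  have hle : Subobject.mk (kernel.ι f ≫ η) ≤ Subobject.mk (kernel.ι f' ≫ p₂ ≫ η) :=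
    Subobject.mk_le_mk_of_comm (kernel.lift f' ξ hξ) (by
      rw [kernel.lift_ι_assoc, pullback.lift_snd_assoc])
  have hge := hmax _ (p₂ ≫ η) f' hf' hle
  have hk : kernel.ι f' ≫ p₂ = Subobject.ofMkLEMk _ _ hge ≫ kernel.ι f := by
    rw [← cancel_mono η, assoc, assoc, Subobject.ofMkLEMk_comp]
  have hz : kernel.ι f' ≫ p₁ = 0 := by
    rw [← cancel_mono j, assoc, zero_comp, pullback.condition, ← assoc, hk, assoc, hKe,
      comp_zero]
  have := mono_of_kernelSubobject_comp_le p₁ (g ≫ image.ι f)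
    (le_kernelSubobject _ _ (by rw [← kernelSubobject_arrow, assoc, hz, comp_zero]))
  exact mono_of_mono g (image.ι f)

lemma exists_monoform_mono_of_ne_zero {G Y : C} [IsNoetherianObject G] (h : G ⟶ Y)
    (hh : h ≠ 0) : ∃ (X : C) (i : X ⟶ Y), Mono i ∧ ¬ IsZero X ∧ Monoform X := by
  let T : Set (Subobject G) := {K | ∃ (H : C) (η : H ⟶ G) (_ : Mono η) (f : H ⟶ Y),
    f ≠ 0 ∧ K = Subobject.mk (kernel.ι f ≫ η)}
  obtain ⟨_, ⟨H, η, _, f, hf, rfl⟩, hK⟩ :=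
    wellFounded_gt.has_min T ⟨_, G, 𝟙 G, inferInstance, h, hh, rfl⟩
  refine ⟨image f, image.ι f, inferInstance, fun h0 => hf ?_,
    monoform_image_of_maximal η f fun H' η' _ f' hf' hle => ?_⟩
  · rw [← image.fac f, h0.eq_of_tgt (factorThruImage f) 0, zero_comp]
  · by_contra hlt
    exact hK _ ⟨H', η', inferInstance, f', hf', rfl⟩ (lt_of_le_not_ge hle hlt)

/-- For a locally noetherian Grothendieck category, the map from the atom spectrum to the
set of isomorphism classes of indecomposable injective objects, sending the atom `[X]` of
a monoform object `X` to its injective envelope `E(X)`, is a bijection: it is injective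
(two monoform objects are atom-equivalent iff their injective envelopes are isomorphic)
and surjective (every indecomposable injective is the injective envelope of a monoform
object). -/
theorem atomSpectrum_equiv_indecomposable_injectives
    {C : Type u} [Category.{v} C] [Abelian C] [GrothendieckCategory C]
    (hln : LocallyNoetherian C) :
    (∀ (X X' E E' : C) (u : X ⟶ E) (u' : X' ⟶ E'),
      Monoform X → ¬ IsZero X → Monoform X' → ¬ IsZero X' →
      IsInjectiveEnvelope u → IsInjectiveEnvelope u' →
      (AtomEquiv X X' ↔ Nonempty (E ≅ E'))) ∧
    (∀ E : C, Injective E → IndecomposableObj E →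
      ∃ (X : C) (u : X ⟶ E), Monoform X ∧ ¬ IsZero X ∧ IsInjectiveEnvelope u) := by
  have := GrothendieckCategory.hasFilteredColimits (C := C)
  have := GrothendieckCategory.ab5 (C := C)
  have := GrothendieckCategory.hasSeparator (C := C)
  refine ⟨fun _ _ _ _ _ _ hX hX0 hX' _ hu hu' => atomEquiv_iff_nonempty_iso hX hX' hX0 hu hu',
    fun E hE hInd => ?_⟩
  obtain ⟨𝒢, h𝒢, hnoeth⟩ := hln
  obtain ⟨G, hG, h, hh⟩ : ∃ G ∈ 𝒢, ∃ h : G ⟶ E, h ≠ 0 := by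
    by_contra! hall
    refine hInd.1 ((IsZero.iff_id_eq_zero E).2 ((Preadditive.isSeparating_iff _).1 h𝒢 (𝟙 E) ?_))
    intro G hG h
    rw [hall G hG h, zero_comp]
  have := hnoeth G hG
  obtain ⟨X, i, _, hX0, hX⟩ := exists_monoform_mono_of_ne_zero h hh
  exact ⟨X, i, hX, hX0, hE, inferInstance, hInd.isEssential i hX0⟩
end

section
/- Let N be a noetherian object of a Grothendieck category G and let T be a hereditary torsion class in G. If N ∉ T, then N admits a quotient N/X which is T-torsionfree and all of whose proper quotients lie in T (i.e., N has a (T,F)-cocritical quotient). -/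
open CategoryTheory Category Limits

universe v u

variable (C : Type u) [Category.{v} C] [Abelian C]

/-- A hereditary torsion (= localizing) class: a class of objects containing the zero
objects and closed under subobjects, quotient objects, extensions and coproducts. -/
def IsHereditaryTorsionClass (T : Set C) : Prop :=
  (∀ X : C, IsZero X → X ∈ T) ∧
  (∀ ⦃X Y : C⦄ (i : Y ⟶ X), Mono i → X ∈ T → Y ∈ T) ∧
  (∀ ⦃X Y : C⦄ (p : X ⟶ Y), Epi p → X ∈ T → Y ∈ T) ∧
  (∀ (S : ShortComplex C), S.ShortExact → S.X₁ ∈ T → S.X₃ ∈ T → S.X₂ ∈ T) ∧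
  (∀ {ι : Type v} (X : ι → C) (_ : HasCoproduct X), (∀ i, X i ∈ T) → sigmaObj X ∈ T)

/-- Let `N` be a noetherian object of a Grothendieck category and `T` a hereditary torsion
class. If `N ∉ T`, then `N` admits a `(T,F)`-cocritical quotient, i.e. a quotient which is
`T`-torsionfree and all of whose proper quotients lie in `T`. -/
theorem noetherian_has_cocritical_quotient [GrothendieckCategory C]
    (T : Set C) (hT : IsHereditaryTorsionClass C T)
    (N : C) (hN : IsNoetherianObject N) (hNT : N ∉ T) :
    ∃ (Z : C) (p : N ⟶ Z), Epi p ∧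
      (∀ W ∈ T, ∀ f : W ⟶ Z, f = 0) ∧
      (∀ (W : C) (q : Z ⟶ W), Epi q → ¬ IsIso q → W ∈ T) := by
  -- closure of `T` under isomorphism
  have hiso : ∀ {X Y : C}, (X ≅ Y) → X ∈ T → Y ∈ T := fun e hX =>
    hT.2.2.1 e.hom inferInstance hX
  -- the set of subobjects with quotient not in T
  set S : Set (Subobject N) := {X | cokernel X.arrow ∉ T} with hS
  have hbot : (⊥ : Subobject N) ∈ S := by
    intro h
    apply hNT
    have w : (⊥ : Subobject N).arrow ≫ 𝟙 N = 0 := by rw [Subobject.bot_arrow, zero_comp]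
    exact hT.2.2.1 (cokernel.desc _ (𝟙 N) w)
      (epi_of_epi_fac (cokernel.π_desc _ _ w)) h
  obtain ⟨X, hXS, hXmax⟩ := (show WellFounded (fun a b : Subobject N => a > b) by haveI := hN; exact wellFounded_gt).has_min S ⟨⊥, hbot⟩
  refine ⟨cokernel X.arrow, cokernel.π X.arrow, inferInstance, ?_⟩
  -- first establish the statement about proper quotients
  have hquot : ∀ (W : C) (q : cokernel X.arrow ⟶ W), Epi q → ¬ IsIso q → W ∈ T := by
    intro W q hq hqn
    set g : N ⟶ W := cokernel.π X.arrow ≫ q with hg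
    have hgepi : Epi g := epi_comp _ _
    have hk0 : X.arrow ≫ g = 0 := by
      rw [hg, ← assoc, cokernel.condition, zero_comp]
    have hle : X ≤ Subobject.mk (kernel.ι g) := by
      refine Subobject.le_mk_of_comm (kernel.lift g X.arrow hk0) (by simp)
    by_cases hX' : Subobject.mk (kernel.ι g) ∈ S
    · -- then `Subobject.mk (kernel.ι g) = X` and `q` is an isomorphism, contradiction
      exfalso
      have heq : X = Subobject.mk (kernel.ι g) := by
        rcases hle.lt_or_eq with hlt | heq
        · exact absurd hlt (hXmax _ hX')
        · exact heq
      -- the isomorphism `kernel g ≅ (X : C)` compatible with arrows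
      let e : kernel g ≅ (X : C) := Subobject.isoOfMkEq (kernel.ι g) X heq.symm
      have he : e.hom ≫ X.arrow = kernel.ι g := Subobject.ofMkLE_arrow _
      -- hence an isomorphism of cokernels
      let e1 : cokernel (kernel.ι g) ≅ cokernel X.arrow :=
        cokernel.mapIso _ _ e (Iso.refl N) (by simp [he])
      have he1 : cokernel.π (kernel.ι g) ≫ e1.hom = cokernel.π X.arrow := by
        simp [e1, cokernel.mapIso]
      have hd2 : IsIso (Abelian.factorThruCoimage g) := Abelian.isIso_factorThruCoimage g
      have hqeq : q = e1.inv ≫ Abelian.factorThruCoimage g := by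
        rw [← cancel_epi (cokernel.π X.arrow), ← he1]
        simp only [assoc, Iso.hom_inv_id_assoc]
        rw [← assoc, he1]
        exact (Abelian.coimage.fac g).symm
      rw [hqeq] at hqn
      exact hqn inferInstance
    · -- then the quotient by the kernel subobject lies in T, and it is isomorphic to W
      simp only [hS, Set.mem_setOf_eq, not_not] at hX'
      refine hiso ?_ hX'
      refine ?_ ≪≫ asIso (Abelian.factorThruCoimage g)
      exact cokernel.mapIso _ _ (Subobject.underlyingIso (kernel.ι g)) (Iso.refl N)
        (by simp)
  refine ⟨?_, hquot⟩
  -- torsionfreeness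
  intro W hW f
  by_contra hf
  have himg : image f ∈ T := hT.2.2.1 (factorThruImage f) inferInstance hW
  have hQ : cokernel (image.ι f) ∈ T := by
    refine hquot _ (cokernel.π _) inferInstance ?_
    intro hiso'
    apply hf
    have hι : image.ι f = 0 := by
      have : Mono (cokernel.π (image.ι f)) := inferInstance
      rw [← cancel_mono (cokernel.π (image.ι f)), cokernel.condition, zero_comp]
    rw [← image.fac f, hι, comp_zero]
  have hse : (ShortComplex.mk (image.ι f) (cokernel.π (image.ι f))
      (cokernel.condition _)).ShortExact :=
    { exact := ShortComplex.exact_of_g_is_cokernel _ (cokernelIsCokernel _) }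
  exact hXS (hT.2.2.2.1 _ hse himg hQ)
end
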